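/- arXiv:math/0205113 — 8 statements merged into one kernel-verified Lean document; each statement's English description precedes it below -/
import Mathlib

section
/- Suppose α > 0, β ≠ 0, ω > 0 and ε > 0. If I₁ > 0, I₂ > 0 and θ₁, θ₂ ∈ ℝ give a fixed point of the system (P), i.e. −2αI₁ − 2β√I₁ cos θ₁ = 0, ½(I₁ + I₂ − ω²) + εβ sin θ₁/√I₁ = 0, −2αI₂ − 2β√I₂ cos θ₂ = 0, and ½(I₁ + I₂ − ω²) + εβ sin θ₂/√I₂ = 0, then I₁ = I₂ and θ₁ ≡ θ₂ (mod 2π). -/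
open Real

/-- Any fixed point of the full polar system (P) with `I₁, I₂ > 0` satisfies
`I₁ = I₂` and `θ₁ ≡ θ₂ (mod 2π)`. -/
theorem fixed_points_symmetric
    (α β ω ε : ℝ) (hα : 0 < α) (hβ : β ≠ 0) (hω : 0 < ω) (hε : 0 < ε)
    (I₁ I₂ θ₁ θ₂ : ℝ) (hI₁ : 0 < I₁) (hI₂ : 0 < I₂)
    (h1 : -2 * α * I₁ - 2 * β * Real.sqrt I₁ * Real.cos θ₁ = 0)
    (h2 : (I₁ + I₂ - ω ^ 2) / 2 + ε * β * Real.sin θ₁ / Real.sqrt I₁ = 0)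
    (h3 : -2 * α * I₂ - 2 * β * Real.sqrt I₂ * Real.cos θ₂ = 0)
    (h4 : (I₁ + I₂ - ω ^ 2) / 2 + ε * β * Real.sin θ₂ / Real.sqrt I₂ = 0) :
    I₁ = I₂ ∧ ∃ k : ℤ, θ₁ = θ₂ + 2 * Real.pi * k := by
  set s₁ := Real.sqrt I₁ with hs₁def
  set s₂ := Real.sqrt I₂ with hs₂def
  have hs₁ : 0 < s₁ := Real.sqrt_pos.mpr hI₁
  have hs₂ : 0 < s₂ := Real.sqrt_pos.mpr hI₂
  have hsq₁ : s₁ ^ 2 = I₁ := Real.sq_sqrt hI₁.le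
  have hsq₂ : s₂ ^ 2 = I₂ := Real.sq_sqrt hI₂.le
  set S := I₁ + I₂ - ω ^ 2 with hSdef
  -- β cos θᵢ = -α sᵢ
  have hc₁ : β * Real.cos θ₁ = -α * s₁ := by
    have : s₁ * (2 * (α * s₁ + β * Real.cos θ₁)) = 0 := by
      rw [← hsq₁] at h1; nlinarith [h1]
    have h := (mul_eq_zero.mp this).resolve_left hs₁.ne'
    nlinarith [h]
  have hc₂ : β * Real.cos θ₂ = -α * s₂ := by
    have : s₂ * (2 * (α * s₂ + β * Real.cos θ₂)) = 0 := by
      rw [← hsq₂] at h3; nlinarith [h3]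
    have h := (mul_eq_zero.mp this).resolve_left hs₂.ne'
    nlinarith [h]
  -- ε β sin θᵢ = -S sᵢ / 2
  have hd₁ : ε * β * Real.sin θ₁ = -S * s₁ / 2 := by
    have h : ε * β * Real.sin θ₁ / s₁ = -(S / 2) := by linarith
    have := (div_eq_iff hs₁.ne').mp h
    linarith
  have hd₂ : ε * β * Real.sin θ₂ = -S * s₂ / 2 := by
    have h : ε * β * Real.sin θ₂ / s₂ = -(S / 2) := by linarith
    have := (div_eq_iff hs₂.ne').mp h
    linarith
  -- Pythagoras: (εβ)² = (ε²α² + S²/4) Iᵢ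
  have hp₁ : (ε * β) ^ 2 = (ε ^ 2 * α ^ 2 + S ^ 2 / 4) * I₁ := by
    have hpy := Real.sin_sq_add_cos_sq θ₁
    have e1 : (ε * β * Real.sin θ₁) ^ 2 = S ^ 2 * I₁ / 4 := by rw [hd₁, ← hsq₁]; ring
    have e2 : (β * Real.cos θ₁) ^ 2 = α ^ 2 * I₁ := by rw [hc₁, ← hsq₁]; ring
    linear_combination e1 + ε ^ 2 * e2 - (ε * β) ^ 2 * hpy
  have hp₂ : (ε * β) ^ 2 = (ε ^ 2 * α ^ 2 + S ^ 2 / 4) * I₂ := by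
    have hpy := Real.sin_sq_add_cos_sq θ₂
    have e1 : (ε * β * Real.sin θ₂) ^ 2 = S ^ 2 * I₂ / 4 := by rw [hd₂, ← hsq₂]; ring
    have e2 : (β * Real.cos θ₂) ^ 2 = α ^ 2 * I₂ := by rw [hc₂, ← hsq₂]; ring
    linear_combination e1 + ε ^ 2 * e2 - (ε * β) ^ 2 * hpy
  have hcoef : 0 < ε ^ 2 * α ^ 2 + S ^ 2 / 4 := by positivity
  have hII : I₁ = I₂ := by
    have := hp₁.symm.trans hp₂
    exact mul_left_cancel₀ hcoef.ne' this
  refine ⟨hII, ?_⟩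
  have hss : s₁ = s₂ := by rw [hs₁def, hs₂def, hII]
  have hcos : Real.cos θ₁ = Real.cos θ₂ := by
    have : β * Real.cos θ₁ = β * Real.cos θ₂ := by rw [hc₁, hc₂, hss]
    exact mul_left_cancel₀ hβ this
  have hsin : Real.sin θ₁ = Real.sin θ₂ := by
    have : ε * β * Real.sin θ₁ = ε * β * Real.sin θ₂ := by rw [hd₁, hd₂, hss]
    exact mul_left_cancel₀ (mul_ne_zero hε.ne' hβ) this
  have hang : (θ₁ : Real.Angle) = (θ₂ : Real.Angle) := by
    apply Real.Angle.cos_sin_inj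
    · exact hcos
    · exact hsin
  obtain ⟨k, hk⟩ := (Real.Angle.angle_eq_iff_two_pi_dvd_sub).mp hang
  exact ⟨k, by linarith [hk]⟩
end

section
/- Let α, β, ω ∈ ℝ and let j₁, j₂, θ₁, θ₂ : ℝ → ℝ be differentiable functions satisfying the leading-order system (L). Then the function τ ↦ H(j₁(τ), j₂(τ), θ₁(τ), θ₂(τ)) = ¼(j₁(τ)+j₂(τ))² + αω²(θ₁(τ)+θ₂(τ)) + √2 βω (sin θ₁(τ) + sin θ₂(τ)) has derivative zero everywhere; i.e. H is a constant of motion of (L). -/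
/-! Along (L) one has `θᵢ' = ∂H/∂jᵢ` and `jᵢ' = -∂H/∂θᵢ`, so by the chain rule
`dH/dτ = Σᵢ (∂H/∂jᵢ · jᵢ' + ∂H/∂θᵢ · θᵢ') = Σᵢ (θᵢ' jᵢ' - jᵢ' θᵢ') = 0`. -/

open Real

theorem hasDerivAt_hamiltonian_comp {α β ω τ j₁' j₂' θ₁' θ₂' : ℝ} {j₁ j₂ θ₁ θ₂ : ℝ → ℝ}
    (hj₁ : HasDerivAt j₁ j₁' τ) (hj₂ : HasDerivAt j₂ j₂' τ)
    (hθ₁ : HasDerivAt θ₁ θ₁' τ) (hθ₂ : HasDerivAt θ₂ θ₂' τ) :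
    HasDerivAt (fun τ =>
      (j₁ τ + j₂ τ) ^ 2 / 4 + α * ω ^ 2 * (θ₁ τ + θ₂ τ) +
        √2 * β * ω * (sin (θ₁ τ) + sin (θ₂ τ)))
      ((j₁ τ + j₂ τ) / 2 * (j₁' + j₂') + α * ω ^ 2 * (θ₁' + θ₂') +
        √2 * β * ω * (cos (θ₁ τ) * θ₁' + cos (θ₂ τ) * θ₂')) τ := by
  refine (((((hj₁.add hj₂).pow 2).div_const 4).add ((hθ₁.add hθ₂).const_mul (α * ω ^ 2))).add
    ((hθ₁.sin.add hθ₂.sin).const_mul (√2 * β * ω))).congr_deriv ?_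
  simp only [Pi.add_apply, Nat.cast_ofNat]
  ring

/-- The Hamiltonian `H = ¼(j₁+j₂)² + αω²(θ₁+θ₂) + √2 βω (sin θ₁ + sin θ₂)`
is a constant of motion of the leading-order system (L). -/
theorem hamiltonian_constant_of_motion
    (α β ω : ℝ) (j₁ j₂ θ₁ θ₂ : ℝ → ℝ)
    (hj₁ : ∀ τ, HasDerivAt j₁ (-(α * ω ^ 2) - Real.sqrt 2 * β * ω * Real.cos (θ₁ τ)) τ)
    (hθ₁ : ∀ τ, HasDerivAt θ₁ ((j₁ τ + j₂ τ) / 2) τ)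
    (hj₂ : ∀ τ, HasDerivAt j₂ (-(α * ω ^ 2) - Real.sqrt 2 * β * ω * Real.cos (θ₂ τ)) τ)
    (hθ₂ : ∀ τ, HasDerivAt θ₂ ((j₁ τ + j₂ τ) / 2) τ) :
    ∀ τ : ℝ, HasDerivAt (fun τ =>
      (j₁ τ + j₂ τ) ^ 2 / 4 + α * ω ^ 2 * (θ₁ τ + θ₂ τ) +
        Real.sqrt 2 * β * ω * (Real.sin (θ₁ τ) + Real.sin (θ₂ τ))) 0 τ := by
  intro τ
  convert hasDerivAt_hamiltonian_comp (hj₁ τ) (hj₂ τ) (hθ₁ τ) (hθ₂ τ) using 1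
  ring
end

section
/- Let α > 0, ω > 0 and β ≠ 0 with 2β² > α²ω². Then there exist ε₀ > 0 and functions I, θ : (0, ε₀) → ℝ such that for every ε ∈ (0, ε₀): I(ε) > 0, 0 < I(ε) < ω²/2, the pair (I(ε), θ(ε)) satisfies the symmetric fixed-point equations (S) (so β sin θ(ε) > 0), and (I(ε) − ω²/2)/ε → −√(2β² − α²ω²)/ω as ε → 0⁺. (This is the saddle fixed point Q_ε with expansion I₁ = ω²/2 − ε ω^{−1}√(2β² − α²ω²) + ⋯.) -/
open Filter Topology Set

/-!
Put `I = ω²/2 - ε u`. Eliminating `θ` through `cos² + sin² = 1`, the system (S) becomes the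
scalar equation `(ω²/2 - ε u)(α² + u²) = β²` for the rescaled unknown `u = (ω²/2 - I)/ε > 0`.
At `u = 0` its left side is `α²ω²/2 < β²`, while at a fixed large `u = M` it exceeds `β²` once
`ε` is small, so the intermediate value theorem yields a root `u(ε) ∈ (0, M)`. Boundedness of
`u` forces `I(ε) → ω²/2`, hence `u(ε)² = β²/I(ε) - α² → (2β² - α²ω²)/ω²`, and
`(I(ε) - ω²/2)/ε = -u(ε)`.
-/

theorem exists_mul_cos_eq_and_mul_sin_eq {r p q : ℝ} (hr : r ≠ 0) (h : p ^ 2 + q ^ 2 = r ^ 2) :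
    ∃ θ : ℝ, r * Real.cos θ = p ∧ r * Real.sin θ = q := by
  set w : ℂ := ⟨p / r, q / r⟩
  have hw : ‖w‖ = 1 := by
    rw [Complex.norm_def, Complex.normSq_mk, Real.sqrt_eq_one]
    field_simp
    linarith
  refine ⟨Complex.arg w, ?_, ?_⟩
  · have := Complex.norm_mul_cos_arg w
    rw [hw, one_mul] at this
    rw [this]
    exact mul_div_cancel₀ p hr
  · have := Complex.norm_mul_sin_arg w
    rw [hw, one_mul] at this
    rw [this]
    exact mul_div_cancel₀ q hr

section RescaledEquation

variable {α β ω : ℝ}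

theorem exists_symmetric_angle {ε I u : ℝ} (hβ : β ≠ 0) (hI : 0 ≤ I)
    (hεu : ε * u = ω ^ 2 / 2 - I) (h : I * (α ^ 2 + u ^ 2) = β ^ 2) :
    ∃ θ : ℝ, β * Real.cos θ = -(α * Real.sqrt I) ∧
      ε * β * Real.sin θ = -(Real.sqrt I * (I - ω ^ 2 / 2)) ∧
      β * Real.sin θ = Real.sqrt I * u := by
  have hsq : (-(α * Real.sqrt I)) ^ 2 + (Real.sqrt I * u) ^ 2 = β ^ 2 := by
    rw [← h, neg_sq, mul_pow, mul_pow, Real.sq_sqrt hI]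
    ring
  obtain ⟨θ, hcos, hsin⟩ := exists_mul_cos_eq_and_mul_sin_eq hβ hsq
  refine ⟨θ, hcos, ?_, hsin⟩
  rw [mul_assoc, hsin]
  linear_combination Real.sqrt I * hεu

theorem eventually_exists_rescaled_root (hω : ω ≠ 0) (h : α ^ 2 * ω ^ 2 < 2 * β ^ 2) :
    ∃ M : ℝ, ∀ᶠ ε in 𝓝[>] 0,
      ∃ u ∈ Ioo 0 M, (ω ^ 2 / 2 - ε * u) * (α ^ 2 + u ^ 2) = β ^ 2 := by
  obtain ⟨M, hM0, hM⟩ : ∃ M : ℝ, 0 ≤ M ∧ β ^ 2 < ω ^ 2 / 2 * (α ^ 2 + M ^ 2) :=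
    ((eventually_ge_atTop 0).and
      (((tendsto_atTop_add_const_left _ (α ^ 2) (tendsto_pow_atTop two_ne_zero)).const_mul_atTop
        (by positivity : (0 : ℝ) < ω ^ 2 / 2)).eventually_gt_atTop (β ^ 2))).exists
  have hlim : Tendsto (fun ε : ℝ => (ω ^ 2 / 2 - ε * M) * (α ^ 2 + M ^ 2)) (𝓝[>] 0)
      (𝓝 (ω ^ 2 / 2 * (α ^ 2 + M ^ 2))) := by
    have hcont : Continuous fun ε : ℝ => (ω ^ 2 / 2 - ε * M) * (α ^ 2 + M ^ 2) := by fun_prop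
    simpa using (hcont.tendsto 0).mono_left nhdsWithin_le_nhds
  refine ⟨M, ?_⟩
  filter_upwards [hlim.eventually_const_lt hM] with ε hε
  refine intermediate_value_Ioo hM0 (by fun_prop) ⟨?_, hε⟩
  norm_num
  linarith

theorem tendsto_rescaled_root {M : ℝ} {u : ℝ → ℝ} (hω : 0 < ω)
    (hu : ∀ᶠ ε in 𝓝[>] 0, u ε ∈ Ioo 0 M ∧
      (ω ^ 2 / 2 - ε * u ε) * (α ^ 2 + u ε ^ 2) = β ^ 2) :
    Tendsto u (𝓝[>] 0) (𝓝 (Real.sqrt (2 * β ^ 2 - α ^ 2 * ω ^ 2) / ω)) := by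
  have hεu : Tendsto (fun ε => ε * u ε) (𝓝[>] 0) (𝓝 0) := by
    refine tendsto_of_tendsto_of_tendsto_of_le_of_le' tendsto_const_nhds
      (by simpa using ((continuous_mul_const M).tendsto 0).mono_left nhdsWithin_le_nhds) ?_ ?_
    · filter_upwards [hu, self_mem_nhdsWithin] with ε hε hε0
      exact mul_nonneg hε0.le hε.1.1.le
    · filter_upwards [hu, self_mem_nhdsWithin] with ε hε hε0
      exact mul_le_mul_of_nonneg_left hε.1.2.le hε0.le
  have hI : Tendsto (fun ε => ω ^ 2 / 2 - ε * u ε) (𝓝[>] 0) (𝓝 (ω ^ 2 / 2)) := by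
    simpa using hεu.const_sub (ω ^ 2 / 2)
  have hω2 : ω ^ 2 / 2 ≠ 0 := by positivity
  have hlim : (2 * β ^ 2 - α ^ 2 * ω ^ 2) / ω ^ 2 = β ^ 2 / (ω ^ 2 / 2) - α ^ 2 := by
    field_simp
  have hc : Real.sqrt (2 * β ^ 2 - α ^ 2 * ω ^ 2) / ω =
      Real.sqrt (β ^ 2 / (ω ^ 2 / 2) - α ^ 2) := by
    rw [← hlim, Real.sqrt_div' _ (sq_nonneg ω), Real.sqrt_sq hω.le]
  rw [hc]
  refine (((tendsto_const_nhds.div hI hω2).sub_const (α ^ 2)).sqrt).congr' ?_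
  filter_upwards [hu, hI.eventually_ne hω2] with ε ⟨hu0, heq⟩ hne
  change Real.sqrt (β ^ 2 / (ω ^ 2 / 2 - ε * u ε) - α ^ 2) = u ε
  rw [← heq, mul_div_cancel_left₀ _ hne, add_sub_cancel_left, Real.sqrt_sq hu0.1.le]

end RescaledEquation

theorem saddle_Qeps_exists_general
    (α ω β : ℝ) (hω : 0 < ω)
    (h2β : α ^ 2 * ω ^ 2 < 2 * β ^ 2) :
    ∃ (ε₀ : ℝ) (_ : 0 < ε₀) (I θ : ℝ → ℝ),
      (∀ ε ∈ Set.Ioo (0 : ℝ) ε₀,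
        0 < I ε ∧ I ε < ω ^ 2 / 2 ∧
        β * Real.cos (θ ε) = -(α * Real.sqrt (I ε)) ∧
        ε * β * Real.sin (θ ε) = -(Real.sqrt (I ε) * (I ε - ω ^ 2 / 2)) ∧
        0 < β * Real.sin (θ ε)) ∧
      Tendsto (fun ε => (I ε - ω ^ 2 / 2) / ε) (𝓝[>] 0)
        (𝓝 (-(Real.sqrt (2 * β ^ 2 - α ^ 2 * ω ^ 2) / ω))) := by
  have hβ : β ≠ 0 := by rintro rfl; nlinarith [sq_nonneg (α * ω)]
  obtain ⟨M, hroot⟩ := eventually_exists_rescaled_root hω.ne' h2β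
  obtain ⟨u, hu⟩ := hroot.choice
  set I : ℝ → ℝ := fun ε => ω ^ 2 / 2 - ε * u ε
  have hI : ∀ᶠ ε in 𝓝[>] 0, 0 < I ε := by
    filter_upwards [hu] with ε ⟨_, heq⟩
    have : 0 < I ε * (α ^ 2 + u ε ^ 2) := heq ▸ by positivity
    exact pos_of_mul_pos_left this (by positivity)
  have hangle : ∀ᶠ ε in 𝓝[>] 0, ∃ θ : ℝ, β * Real.cos θ = -(α * Real.sqrt (I ε)) ∧
      ε * β * Real.sin θ = -(Real.sqrt (I ε) * (I ε - ω ^ 2 / 2)) ∧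
      β * Real.sin θ = Real.sqrt (I ε) * u ε := by
    filter_upwards [hu, hI] with ε ⟨_, heq⟩ hIε
    exact exists_symmetric_angle hβ hIε.le (by ring) heq
  obtain ⟨θ, hθ⟩ := hangle.choice
  obtain ⟨ε₀, hε₀, hsub⟩ := mem_nhdsGT_iff_exists_Ioo_subset.1 (hu.and (hI.and hθ))
  refine ⟨ε₀, hε₀, I, θ, fun ε hε => ?_, ?_⟩
  · obtain ⟨⟨⟨hu0, -⟩, -⟩, hIε, hcos, hsin, hβsin⟩ := hsub hε
    refine ⟨hIε, sub_lt_self _ (mul_pos hε.1 hu0), hcos, hsin, ?_⟩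
    rw [hβsin]
    exact mul_pos (Real.sqrt_pos.2 hIε) hu0
  · refine (tendsto_rescaled_root hω hu).neg.congr' ?_
    filter_upwards [self_mem_nhdsWithin] with ε (hε : 0 < ε)
    field_simp
    ring

/-- Existence of the saddle fixed point `Q_ε`, with expansion
`I₁ = ω²/2 − ε ω⁻¹ √(2β² − α²ω²) + ⋯`. -/
theorem saddle_Qeps_exists
    (α ω β : ℝ) (hα : 0 < α) (hω : 0 < ω) (hβ : β ≠ 0)
    (h2β : α ^ 2 * ω ^ 2 < 2 * β ^ 2) :
    ∃ (ε₀ : ℝ) (_ : 0 < ε₀) (I θ : ℝ → ℝ),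
      (∀ ε ∈ Set.Ioo (0 : ℝ) ε₀,
        0 < I ε ∧ I ε < ω ^ 2 / 2 ∧
        β * Real.cos (θ ε) = -(α * Real.sqrt (I ε)) ∧
        ε * β * Real.sin (θ ε) = -(Real.sqrt (I ε) * (I ε - ω ^ 2 / 2)) ∧
        0 < β * Real.sin (θ ε)) ∧
      Tendsto (fun ε => (I ε - ω ^ 2 / 2) / ε) (𝓝[>] 0)
        (𝓝 (-(Real.sqrt (2 * β ^ 2 - α ^ 2 * ω ^ 2) / ω))) :=
  saddle_Qeps_exists_general α ω β hω h2β
end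

section
/- Let α > 0, ω > 0 and β ≠ 0 with 2β² > α²ω². Then there exist ε₀ > 0 and functions I, θ : (0, ε₀) → ℝ such that for every ε ∈ (0, ε₀): I(ε) > ω²/2, the pair (I(ε), θ(ε)) satisfies the symmetric fixed-point equations (S) (so β sin θ(ε) < 0), and (I(ε) − ω²/2)/ε → √(2β² − α²ω²)/ω as ε → 0⁺. (This is the focus fixed point P_ε with expansion I₁ = ω²/2 + ε ω^{−1}√(2β² − α²ω²) + ⋯.) -/
/-!
Write `I = ω²/2 + ε u`. Since the equations (S) prescribe `β cos θ` and `ε β sin θ`, they have a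
solution `θ` exactly when the sum of squares matches, which reduces to `I (u² + α²) = β²`. For every
`ε ≥ 0` the intermediate value theorem gives a root `u > 0` with `u² ≤ 2β²/ω²`; as `u` stays bounded,
`I → ω²/2`, hence `u² = β²/I − α² → 2β²/ω² − α²` when `ε → 0⁺`.
-/

open Filter Topology Real

theorem exists_cos_sin_eq_of_sq_add_sq_eq_one {x y : ℝ} (h : x ^ 2 + y ^ 2 = 1) :
    ∃ θ : ℝ, cos θ = x ∧ sin θ = y := by
  have hz : ‖(⟨x, y⟩ : ℂ)‖ = 1 := by
    rw [Complex.norm_def, Complex.normSq_mk, ← sq, ← sq, h, Real.sqrt_one]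
  refine ⟨Complex.arg ⟨x, y⟩, ?_, ?_⟩
  · rw [Complex.cos_arg (norm_ne_zero_iff.mp (hz.symm ▸ one_ne_zero)), hz, div_one]
  · rw [Complex.sin_arg, hz, div_one]

theorem exists_mul_cos_mul_sin_eq {p q x y : ℝ} (hp : p ≠ 0) (hq : q ≠ 0)
    (h : x ^ 2 * q ^ 2 + y ^ 2 * p ^ 2 = p ^ 2 * q ^ 2) :
    ∃ θ : ℝ, p * cos θ = x ∧ q * sin θ = y := by
  obtain ⟨θ, hcos, hsin⟩ := exists_cos_sin_eq_of_sq_add_sq_eq_one (x := x / p) (y := y / q) (by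
    field_simp
    linear_combination h)
  exact ⟨θ, by rw [hcos]; field_simp, by rw [hsin]; field_simp⟩

theorem exists_pos_root_mul_sq_add {a b c ε : ℝ} (hc : 0 < c) (hε : 0 ≤ ε) (ha : 0 ≤ a)
    (hab : a * c < b) :
    ∃ u : ℝ, 0 < u ∧ c * u ^ 2 ≤ b ∧ (c + ε * u) * (u ^ 2 + a) = b := by
  set K := √(b / c)
  have hK : 0 ≤ K := sqrt_nonneg _
  have hcK : c * K ^ 2 = b := by
    rw [sq_sqrt (div_nonneg (by nlinarith) hc.le)]; field_simp
  have hp : ContinuousOn (fun u => (c + ε * u) * (u ^ 2 + a)) (Set.Icc 0 K) := by fun_prop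
  have hbK : b ≤ (c + ε * K) * (K ^ 2 + a) := by nlinarith [mul_nonneg hε hK]
  obtain ⟨u, ⟨hu0, -⟩, hu⟩ := intermediate_value_Icc hK hp ⟨by nlinarith, hbK⟩
  have hu : (c + ε * u) * (u ^ 2 + a) = b := hu
  refine ⟨u, lt_of_le_of_ne hu0 ?_, ?_, hu⟩
  · rintro rfl
    linarith [hu]
  · nlinarith [mul_nonneg hε hu0, sq_nonneg u]

theorem tendsto_root_mul_sq_add {a b c : ℝ} (hc : 0 < c) {u : ℝ → ℝ}
    (hu : ∀ ε > 0, 0 ≤ u ε ∧ c * u ε ^ 2 ≤ b ∧ (c + ε * u ε) * (u ε ^ 2 + a) = b) :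
    Tendsto u (𝓝[>] 0) (𝓝 √(b / c - a)) := by
  set K := √(b / c)
  have hbound : ∀ ε > 0, u ε ≤ K := fun ε hε =>
    le_sqrt_of_sq_le ((le_div_iff₀ hc).mpr (by linarith [(hu ε hε).2.1]))
  have hI : Tendsto (fun ε => c + ε * u ε) (𝓝[>] 0) (𝓝 c) := by
    have hKε : Tendsto (fun ε : ℝ => ε * K) (𝓝[>] 0) (𝓝 0) :=
      ((continuous_mul_const K).tendsto' 0 0 (zero_mul K)).mono_left nhdsWithin_le_nhds
    have hεu : Tendsto (fun ε => ε * u ε) (𝓝[>] 0) (𝓝 0) :=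
      tendsto_of_tendsto_of_tendsto_of_le_of_le' tendsto_const_nhds hKε
        (eventually_nhdsWithin_of_forall fun ε hε => mul_nonneg (le_of_lt hε) (hu ε hε).1)
        (eventually_nhdsWithin_of_forall fun ε hε =>
          mul_le_mul_of_nonneg_left (hbound ε hε) (le_of_lt hε))
    simpa using hεu.const_add c
  have hsq : Tendsto (fun ε => b / (c + ε * u ε) - a) (𝓝[>] 0) (𝓝 (b / c - a)) :=
    (tendsto_const_nhds.div hI hc.ne').sub_const a
  refine (hsq.sqrt).congr' (eventually_nhdsWithin_of_forall fun ε hε => ?_)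
  obtain ⟨hu0, -, hroot⟩ := hu ε hε
  have hIpos : 0 < c + ε * u ε := by nlinarith [mul_nonneg (le_of_lt hε) hu0]
  rw [← hroot, mul_div_cancel_left₀ _ hIpos.ne', add_sub_cancel_right, sqrt_sq hu0]

theorem exists_symmetric_fixed_point_angle {α β c ε u : ℝ} (hβ : β ≠ 0) (hε : ε ≠ 0)
    (hI : 0 ≤ c + ε * u) (hroot : (c + ε * u) * (u ^ 2 + α ^ 2) = β ^ 2) :
    ∃ θ : ℝ, β * cos θ = -(α * √(c + ε * u)) ∧
      ε * β * sin θ = -(√(c + ε * u) * (c + ε * u - c)) := by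
  have hsqrt := sq_sqrt hI
  refine exists_mul_cos_mul_sin_eq hβ (mul_ne_zero hε hβ) ?_
  linear_combination (ε ^ 2 * β ^ 2 * (α ^ 2 + u ^ 2)) * hsqrt + ε ^ 2 * β ^ 2 * hroot

theorem focus_Peps_exists_general
    (α ω β : ℝ) (hω : 0 < ω) (hβ : β ≠ 0)
    (h2β : α ^ 2 * ω ^ 2 < 2 * β ^ 2) :
    ∃ (ε₀ : ℝ) (_ : 0 < ε₀) (I θ : ℝ → ℝ),
      (∀ ε ∈ Set.Ioo (0 : ℝ) ε₀,
        ω ^ 2 / 2 < I ε ∧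
        β * Real.cos (θ ε) = -(α * Real.sqrt (I ε)) ∧
        ε * β * Real.sin (θ ε) = -(Real.sqrt (I ε) * (I ε - ω ^ 2 / 2)) ∧
        β * Real.sin (θ ε) < 0) ∧
      Tendsto (fun ε => (I ε - ω ^ 2 / 2) / ε) (𝓝[>] 0)
        (𝓝 (Real.sqrt (2 * β ^ 2 - α ^ 2 * ω ^ 2) / ω)) := by
  have hc : 0 < ω ^ 2 / 2 := by positivity
  choose! u hu using fun ε (hε : 0 ≤ ε) =>
    exists_pos_root_mul_sq_add hc hε (sq_nonneg α) (by linarith : α ^ 2 * (ω ^ 2 / 2) < β ^ 2)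
  choose! θ hθ using fun ε (hε : 0 < ε) =>
    exists_symmetric_fixed_point_angle hβ hε.ne'
      (by nlinarith [(hu ε hε.le).1]) (hu ε hε.le).2.2
  have hquot : ∀ ε > 0, (ω ^ 2 / 2 + ε * u ε - ω ^ 2 / 2) / ε = u ε := fun ε hε => by
    rw [add_sub_cancel_left, mul_div_cancel_left₀ _ hε.ne']
  have hlim : √(β ^ 2 / (ω ^ 2 / 2) - α ^ 2) = √(2 * β ^ 2 - α ^ 2 * ω ^ 2) / ω := by
    rw [show β ^ 2 / (ω ^ 2 / 2) - α ^ 2 = (2 * β ^ 2 - α ^ 2 * ω ^ 2) / ω ^ 2 by field_simp,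
      sqrt_div' _ (sq_nonneg ω), sqrt_sq hω.le]
  refine ⟨1, one_pos, fun ε => ω ^ 2 / 2 + ε * u ε, θ, fun ε hε => ?_, ?_⟩
  · obtain ⟨hcos, hsin⟩ := hθ ε hε.1
    have hgap : 0 < ε * u ε := mul_pos hε.1 (hu ε hε.1.le).1
    refine ⟨by linarith, hcos, hsin, neg_of_mul_neg_right (a := ε) ?_ hε.1.le⟩
    rw [← mul_assoc, hsin, add_sub_cancel_left, neg_lt_zero]
    exact mul_pos (sqrt_pos.mpr (by linarith)) hgap
  · rw [← hlim]
    exact (tendsto_root_mul_sq_add hc fun ε hε => ⟨(hu ε hε.le).1.le, (hu ε hε.le).2⟩).congr'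
      (eventually_nhdsWithin_of_forall fun ε hε => (hquot ε hε).symm)

/-- Existence of the focus fixed point `P_ε`, with expansion
`I₁ = ω²/2 + ε ω⁻¹ √(2β² − α²ω²) + ⋯`. -/
theorem focus_Peps_exists
    (α ω β : ℝ) (hα : 0 < α) (hω : 0 < ω) (hβ : β ≠ 0)
    (h2β : α ^ 2 * ω ^ 2 < 2 * β ^ 2) :
    ∃ (ε₀ : ℝ) (_ : 0 < ε₀) (I θ : ℝ → ℝ),
      (∀ ε ∈ Set.Ioo (0 : ℝ) ε₀,
        ω ^ 2 / 2 < I ε ∧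
        β * Real.cos (θ ε) = -(α * Real.sqrt (I ε)) ∧
        ε * β * Real.sin (θ ε) = -(Real.sqrt (I ε) * (I ε - ω ^ 2 / 2)) ∧
        β * Real.sin (θ ε) < 0) ∧
      Tendsto (fun ε => (I ε - ω ^ 2 / 2) / ε) (𝓝[>] 0)
        (𝓝 (Real.sqrt (2 * β ^ 2 - α ^ 2 * ω ^ 2) / ω)) :=
  focus_Peps_exists_general α ω β hω hβ h2β
end

section
/- Let α > 0, ω > 0 and β ≠ 0. Then there exist ε₀ > 0 and functions I, θ : (0, ε₀) → ℝ such that for every ε ∈ (0, ε₀): I(ε) > 0, the pair (I(ε), θ(ε)) satisfies the symmetric fixed-point equations (S) with β sin θ(ε) > 0, and I(ε)/ε² → 4β²ω^{−4} as ε → 0⁺. (This is the focus fixed point O_ε near the origin, with expansion I₁ = 4ε²β²ω^{−4} + ⋯.) -/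
open Filter Topology

/-!
Eliminating `θ` from (S) by `cos² θ + sin² θ = 1` leaves the scalar equation
`I (α²ε² + (I - ω²/2)²) = β²ε²`; conversely every root `I ≥ 0` determines a point
`(cos θ, sin θ)` of the unit circle, hence `θ`. For `|β| ε < ω³/8` the intermediate value
theorem gives a root in `(0, ω²/4)`. There the bracket exceeds `ω⁴/16`, so `I = O(ε²)`, and
`I/ε² = β² / (α²ε² + (I - ω²/2)²) → β² / (ω²/2)²`. Since `I < ω²/2`, the second equation of (S)
forces `β sin θ > 0`.
-/

theorem exists_cos_eq_sin_eq {x y : ℝ} (h : x ^ 2 + y ^ 2 = 1) :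
    ∃ θ : ℝ, Real.cos θ = x ∧ Real.sin θ = y := by
  set z : ℂ := ⟨x, y⟩
  have hz : ‖z‖ = 1 := by
    rw [Complex.norm_def, Complex.normSq_mk, ← sq, ← sq, h, Real.sqrt_one]
  have hz0 : z ≠ 0 := by rintro h0; simp [h0] at hz
  exact ⟨z.arg, by rw [Complex.cos_arg hz0, hz, div_one], by rw [Complex.sin_arg, hz, div_one]⟩

section FocusFixedPoint

variable {α β ω ε I : ℝ}

theorem exists_symmetric_fixed_point_angle_s16 (hβ : β ≠ 0) (hε : ε ≠ 0) (hI : 0 ≤ I)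
    (hred : I * (α ^ 2 * ε ^ 2 + (I - ω ^ 2 / 2) ^ 2) = β ^ 2 * ε ^ 2) :
    ∃ θ : ℝ, β * Real.cos θ = -(α * Real.sqrt I) ∧
      ε * β * Real.sin θ = -(Real.sqrt I * (I - ω ^ 2 / 2)) := by
  have hsq : Real.sqrt I ^ 2 = I := Real.sq_sqrt hI
  obtain ⟨θ, hcos, hsin⟩ := exists_cos_eq_sin_eq
    (x := -(α * Real.sqrt I) / β) (y := -(Real.sqrt I * (I - ω ^ 2 / 2)) / (ε * β)) (by
      field_simp
      rw [hsq]
      linear_combination 4 * hred)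
  refine ⟨θ, ?_, ?_⟩
  · rw [hcos]; field_simp
  · rw [hsin]; field_simp

theorem exists_reduced_root (hω : 0 < ω) (hβ : β ≠ 0) (hε : 0 < ε)
    (hεβ : |β| * ε < ω ^ 3 / 8) :
    ∃ I ∈ Set.Ioo 0 (ω ^ 2 / 4), I * (α ^ 2 * ε ^ 2 + (I - ω ^ 2 / 2) ^ 2) = β ^ 2 * ε ^ 2 := by
  have hcont : ContinuousOn (fun I : ℝ => I * (α ^ 2 * ε ^ 2 + (I - ω ^ 2 / 2) ^ 2))
      (Set.Icc 0 (ω ^ 2 / 4)) := by fun_prop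
  have hsq : β ^ 2 * ε ^ 2 < (ω ^ 3 / 8) ^ 2 := by
    rw [← sq_abs β, ← mul_pow]
    exact pow_lt_pow_left₀ hεβ (by positivity) two_ne_zero
  refine intermediate_value_Ioo (by positivity) hcont ⟨by simp; positivity, ?_⟩
  nlinarith [mul_nonneg (mul_nonneg (sq_nonneg α) (sq_nonneg ε)) (sq_nonneg ω)]

theorem mul_sin_pos_of_fixed_point {θ : ℝ} (hε : 0 < ε) (hI : 0 < I) (hIω : I < ω ^ 2 / 2)
    (hsin : ε * β * Real.sin θ = -(Real.sqrt I * (I - ω ^ 2 / 2))) :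
    0 < β * Real.sin θ := by
  have : 0 < ε * (β * Real.sin θ) := by
    rw [← mul_assoc, hsin, ← mul_neg, neg_sub]
    exact mul_pos (Real.sqrt_pos.2 hI) (sub_pos.2 hIω)
  exact pos_of_mul_pos_right this hε.le

theorem tendsto_reduced_root_div_sq (hω : 0 < ω) {ε₀ : ℝ} (hε₀ : 0 < ε₀) {I : ℝ → ℝ}
    (hI : ∀ ε ∈ Set.Ioo 0 ε₀, I ε ∈ Set.Ioo 0 (ω ^ 2 / 4))
    (hred : ∀ ε ∈ Set.Ioo 0 ε₀,
      I ε * (α ^ 2 * ε ^ 2 + (I ε - ω ^ 2 / 2) ^ 2) = β ^ 2 * ε ^ 2) :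
    Tendsto (fun ε => I ε / ε ^ 2) (𝓝[>] 0) (𝓝 (4 * β ^ 2 / ω ^ 4)) := by
  have hnear : ∀ᶠ ε in 𝓝[>] 0, ε ∈ Set.Ioo 0 ε₀ := Ioo_mem_nhdsGT hε₀
  have hden : ∀ ε ∈ Set.Ioo 0 ε₀, ω ^ 4 / 16 < α ^ 2 * ε ^ 2 + (I ε - ω ^ 2 / 2) ^ 2 := by
    intro ε hε
    have := (hI ε hε).2
    nlinarith [sq_nonneg (α * ε)]
  have hformula : ∀ ε ∈ Set.Ioo 0 ε₀,
      I ε / ε ^ 2 = β ^ 2 / (α ^ 2 * ε ^ 2 + (I ε - ω ^ 2 / 2) ^ 2) := by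
    intro ε hε
    have : 0 < α ^ 2 * ε ^ 2 + (I ε - ω ^ 2 / 2) ^ 2 := (hden ε hε).trans' (by positivity)
    rw [div_eq_div_iff (pow_pos hε.1 2).ne' this.ne', ← hred ε hε]
  have hε : Tendsto (fun ε : ℝ => ε) (𝓝[>] 0) (𝓝 0) := nhdsWithin_le_nhds
  have hI0 : Tendsto I (𝓝[>] 0) (𝓝 0) := by
    refine tendsto_of_tendsto_of_tendsto_of_le_of_le' tendsto_const_nhds
      (h := fun ε => 16 * β ^ 2 / ω ^ 4 * ε ^ 2) ?_ ?_ ?_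
    · simpa using (hε.pow 2).const_mul (16 * β ^ 2 / ω ^ 4)
    · filter_upwards [hnear] with ε hε using (hI ε hε).1.le
    · filter_upwards [hnear] with ε hε
      obtain ⟨hIpos, -⟩ := hI ε hε
      have := hden ε hε
      rw [div_mul_eq_mul_div, le_div_iff₀ (by positivity)]
      nlinarith [hred ε hε]
  have hlim := tendsto_const_nhds (x := β ^ 2) |>.div
    (((hε.pow 2).const_mul (α ^ 2)).add ((hI0.sub_const (ω ^ 2 / 2)).pow 2))
    (by simp [hω.ne'])
  have hval : β ^ 2 / (α ^ 2 * 0 ^ 2 + (0 - ω ^ 2 / 2) ^ 2) = 4 * β ^ 2 / ω ^ 4 := by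
    field_simp
    ring
  rw [hval] at hlim
  exact hlim.congr' (by filter_upwards [hnear] with ε hε using (hformula ε hε).symm)

end FocusFixedPoint

theorem focus_Oeps_exists_general
    (α ω β : ℝ) (hω : 0 < ω) (hβ : β ≠ 0) :
    ∃ (ε₀ : ℝ) (_ : 0 < ε₀) (I θ : ℝ → ℝ),
      (∀ ε ∈ Set.Ioo (0 : ℝ) ε₀,
        0 < I ε ∧
        β * Real.cos (θ ε) = -(α * Real.sqrt (I ε)) ∧
        ε * β * Real.sin (θ ε) = -(Real.sqrt (I ε) * (I ε - ω ^ 2 / 2)) ∧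
        0 < β * Real.sin (θ ε)) ∧
      Tendsto (fun ε => I ε / ε ^ 2) (𝓝[>] 0) (𝓝 (4 * β ^ 2 / ω ^ 4)) := by
  obtain ⟨ε₀, hε₀, hsmall⟩ : ∃ ε₀ > 0, ∀ ε ∈ Set.Ioo 0 ε₀, |β| * ε < ω ^ 3 / 8 := by
    refine ⟨ω ^ 3 / (8 * |β|), by positivity, fun ε hε => ?_⟩
    have := hε.2
    rw [lt_div_iff₀ (by positivity)] at this
    linarith
  choose! I hI hred using fun ε (hε : ε ∈ Set.Ioo 0 ε₀) =>
    exists_reduced_root (α := α) hω hβ hε.1 (hsmall ε hε)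
  choose! θ hcos hsin using fun ε (hε : ε ∈ Set.Ioo 0 ε₀) =>
    exists_symmetric_fixed_point_angle_s16 hβ hε.1.ne' (hI ε hε).1.le (hred ε hε)
  refine ⟨ε₀, hε₀, I, θ, fun ε hε => ⟨(hI ε hε).1, hcos ε hε, hsin ε hε, ?_⟩,
    tendsto_reduced_root_div_sq hω hε₀ hI hred⟩
  have hIω : I ε < ω ^ 2 / 2 := by linarith [(hI ε hε).2, pow_pos hω 2]
  exact mul_sin_pos_of_fixed_point hε.1 (hI ε hε).1 hIω (hsin ε hε)

/-- Existence of the focus fixed point `O_ε` near the origin, with expansion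
`I₁ = 4ε²β²ω⁻⁴ + ⋯`. -/
theorem focus_Oeps_exists
    (α ω β : ℝ) (hα : 0 < α) (hω : 0 < ω) (hβ : β ≠ 0) :
    ∃ (ε₀ : ℝ) (_ : 0 < ε₀) (I θ : ℝ → ℝ),
      (∀ ε ∈ Set.Ioo (0 : ℝ) ε₀,
        0 < I ε ∧
        β * Real.cos (θ ε) = -(α * Real.sqrt (I ε)) ∧
        ε * β * Real.sin (θ ε) = -(Real.sqrt (I ε) * (I ε - ω ^ 2 / 2)) ∧
        0 < β * Real.sin (θ ε)) ∧
      Tendsto (fun ε => I ε / ε ^ 2) (𝓝[>] 0) (𝓝 (4 * β ^ 2 / ω ^ 4)) :=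
  focus_Oeps_exists_general α ω β hω hβ
end

section
/- Let α, β, ω, ε ∈ ℝ, I > 0 and θ ∈ ℝ with β cos θ = −α√I. Let M be the 4×4 real matrix (the Jacobian of the full polar system (P) at the symmetric point (I₁,θ₁,I₂,θ₂) = (I,θ,I,θ), in the variable order (I₁, θ₁, I₂, θ₂)): M = [[−εα, 2εβ√I sin θ, 0, 0], [½ − εβ sin θ/(2I^{3/2}), −εα, ½, 0], [0, 0, −εα, 2εβ√I sin θ], [½, 0, ½ − εβ sin θ/(2I^{3/2}), −εα]]. Then the characteristic polynomial of M equals ((X + εα)² − 2εβ√I sin θ + ε²β² sin²θ/I) · ((X + εα)² + ε²β² sin²θ/I). -/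
open Polynomial

private theorem det_fin_four' {R : Type*} [CommRing R] (A : Matrix (Fin 4) (Fin 4) R) :
    A.det =
      A 0 0*A 1 1*A 2 2*A 3 3 - A 0 0*A 1 1*A 2 3*A 3 2 - A 0 0*A 1 2*A 2 1*A 3 3 + A 0 0*A 1 2*A 2 3*A 3 1 + A 0 0*A 1 3*A 2 1*A 3 2 - A 0 0*A 1 3*A 2 2*A 3 1 - A 0 1*A 1 0*A 2 2*A 3 3 + A 0 1*A 1 0*A 2 3*A 3 2 + A 0 1*A 1 2*A 2 0*A 3 3 - A 0 1*A 1 2*A 2 3*A 3 0 - A 0 1*A 1 3*A 2 0*A 3 2 + A 0 1*A 1 3*A 2 2*A 3 0 + A 0 2*A 1 0*A 2 1*A 3 3 - A 0 2*A 1 0*A 2 3*A 3 1 - A 0 2*A 1 1*A 2 0*A 3 3 + A 0 2*A 1 1*A 2 3*A 3 0 + A 0 2*A 1 3*A 2 0*A 3 1 - A 0 2*A 1 3*A 2 1*A 3 0 - A 0 3*A 1 0*A 2 1*A 3 2 + A 0 3*A 1 0*A 2 2*A 3 1 + A 0 3*A 1 1*A 2 0*A 3 2 - A 0 3*A 1 1*A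 2 2*A 3 0 - A 0 3*A 1 2*A 2 0*A 3 1 + A 0 3*A 1 2*A 2 1*A 3 0 := by
  rw [Matrix.det_succ_row_zero, Fin.sum_univ_four]
  simp [Matrix.det_fin_three, Matrix.submatrix, Fin.succAbove,
    show (Fin.succ (2:Fin 3) : Fin 4) = 3 from rfl,
    show (Fin.castSucc (2:Fin 3) : Fin 4) = 2 from rfl,
    show ¬((2:Fin 4) < 2) from by decide,
    show ((2:Fin 4) < 3) from by decide,
    show (((3:Fin 4)):ℕ) = 3 from rfl]
  ring

/-- The characteristic polynomial of the Jacobian of the full polar system (P)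
at a symmetric fixed point `(I, θ, I, θ)` factors as
`((X + εα)² − 2εβ√I sin θ + ε²β² sin²θ/I) ((X + εα)² + ε²β² sin²θ/I)`. -/
theorem full_jacobian_charpoly
    (α β ω ε : ℝ) (I : ℝ) (hI : 0 < I) (θ : ℝ)
    (hfix : β * Real.cos θ = -(α * Real.sqrt I))
    (M : Matrix (Fin 4) (Fin 4) ℝ)
    (hM : M = !![-(ε * α), 2 * ε * β * Real.sqrt I * Real.sin θ, 0, 0;
                 1/2 - ε * β * Real.sin θ / (2 * (I * Real.sqrt I)), -(ε * α), 1/2, 0;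
                 0, 0, -(ε * α), 2 * ε * β * Real.sqrt I * Real.sin θ;
                 1/2, 0, 1/2 - ε * β * Real.sin θ / (2 * (I * Real.sqrt I)), -(ε * α)]) :
    M.charpoly =
      ((X + C (ε * α)) ^ 2 - C (2 * ε * β * Real.sqrt I * Real.sin θ) +
        C (ε ^ 2 * β ^ 2 * Real.sin θ ^ 2 / I)) *
      ((X + C (ε * α)) ^ 2 + C (ε ^ 2 * β ^ 2 * Real.sin θ ^ 2 / I)) := by
  have hI0 : I ≠ 0 := ne_of_gt hI
  have hr0 : Real.sqrt I ≠ 0 := ne_of_gt (Real.sqrt_pos.2 hI)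
  have hE : ε ^ 2 * β ^ 2 * Real.sin θ ^ 2 / I
      = (2 * ε * β * Real.sqrt I * Real.sin θ)
        * (ε * β * Real.sin θ / (2 * (I * Real.sqrt I))) := by
    field_simp
    try ring
  set a := ε * α with ha
  set b := 2 * ε * β * Real.sqrt I * Real.sin θ with hb
  set k := ε * β * Real.sin θ / (2 * (I * Real.sqrt I)) with hk
  subst hM
  rw [Matrix.charpoly, det_fin_four', hE]
  simp only [Matrix.charmatrix_apply_eq, Matrix.charmatrix_apply_ne, ne_eq, Fin.reduceEq,
    not_false_eq_true,
    Matrix.cons_val', Matrix.cons_val_zero, Matrix.cons_val_one, Matrix.head_cons,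
    Matrix.empty_val', Matrix.cons_val_fin_one, Matrix.head_fin_const, Matrix.cons_val_two,
    Matrix.cons_val_three, Matrix.tail_cons, Matrix.of_apply, map_sub, map_neg, map_zero, map_mul]
  have h2 : (2 : ℝ[X]) * C ((1:ℝ)/2) = 1 := by
    rw [← map_ofNat (C : ℝ →+* ℝ[X]) 2, ← map_mul]
    norm_num
  linear_combination (-(C b) * ((X + C a) ^ 2 + C b * C k)) * h2
end

section
/- Let α, β, ω ∈ ℝ, ε > 0, I > 0 and θ ∈ ℝ with β cos θ = −α√I and β sin θ < 0. Let M be the 4×4 real matrix M = [[−εα, 2εβ√I sin θ, 0, 0], [½ − εβ sin θ/(2I^{3/2}), −εα, ½, 0], [0, 0, −εα, 2εβ√I sin θ], [½, 0, ½ − εβ sin θ/(2I^{3/2}), −εα]]. Then every complex eigenvalue λ of M satisfies Re λ = −εα; in particular if α > 0 all eigenvalues have negative real part (the fixed points P_ε and O_ε are stable foci). -/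
/-- If `μ² = r` with `r < 0` real, then `μ` is purely imaginary. -/
lemma re_eq_zero_of_sq_neg (μ : ℂ) (r : ℝ) (hr : r < 0) (h : μ ^ 2 = (r : ℂ)) :
    μ.re = 0 := by
  have hre := congrArg Complex.re h
  have him := congrArg Complex.im h
  simp [pow_two, Complex.mul_re, Complex.mul_im] at hre him
  -- him : μ.re * μ.im + μ.im * μ.re = 0
  have h0 : μ.re * μ.im = 0 := by linarith
  rcases mul_eq_zero.mp h0 with h1 | h1
  · exact h1
  · exfalso
    rw [h1] at hre
    nlinarith [sq_nonneg μ.re]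

/-- At a symmetric fixed point with `β sin θ < 0` (the foci `P_ε`, `O_ε`),
every complex eigenvalue of the Jacobian `M` has real part `−εα`; in
particular if `α > 0` all eigenvalues have negative real part. -/
theorem foci_eigenvalues_real_part
    (α β ω ε : ℝ) (hε : 0 < ε) (I : ℝ) (hI : 0 < I) (θ : ℝ)
    (hfix : β * Real.cos θ = -(α * Real.sqrt I))
    (hsin : β * Real.sin θ < 0)
    (M : Matrix (Fin 4) (Fin 4) ℝ)
    (hM : M = !![-(ε * α), 2 * ε * β * Real.sqrt I * Real.sin θ, 0, 0;
                 1/2 - ε * β * Real.sin θ / (2 * (I * Real.sqrt I)), -(ε * α), 1/2, 0;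
                 0, 0, -(ε * α), 2 * ε * β * Real.sqrt I * Real.sin θ;
                 1/2, 0, 1/2 - ε * β * Real.sin θ / (2 * (I * Real.sqrt I)), -(ε * α)]) :
    ∀ lam : ℂ,
      (∃ v : Fin 4 → ℂ, v ≠ 0 ∧
        (M.map (fun x : ℝ => (x : ℂ))).mulVec v = lam • v) →
      lam.re = -(ε * α) ∧ (0 < α → lam.re < 0) := by
  subst hM
  intro lam hlam
  obtain ⟨v, hv0, hv⟩ := hlam
  have hs : 0 < Real.sqrt I := Real.sqrt_pos.mpr hI
  set s : ℝ := Real.sqrt I with hs_def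
  set a : ℝ := 2 * ε * β * s * Real.sin θ with ha_def
  set b : ℝ := 1/2 - ε * β * Real.sin θ / (2 * (I * s)) with hb_def
  have ha : a < 0 := by
    have h1 : 2 * ε * s > 0 := by positivity
    calc a = (2 * ε * s) * (β * Real.sin θ) := by ring
    _ < 0 := mul_neg_of_pos_of_neg h1 hsin
  have ha' : a ≠ 0 := ne_of_lt ha
  have hbhalf : 1/2 < b := by
    have hden : 0 < 2 * (I * s) := by positivity
    have hnum : ε * β * Real.sin θ < 0 := by
      calc ε * β * Real.sin θ = ε * (β * Real.sin θ) := by ring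
      _ < 0 := mul_neg_of_pos_of_neg hε hsin
    have hq : ε * β * Real.sin θ / (2 * (I * s)) < 0 := div_neg_of_neg_of_pos hnum hden
    rw [hb_def]; linarith
  -- extract scalar equations
  have e0 := congrFun hv 0
  have e1 := congrFun hv 1
  have e2 := congrFun hv 2
  have e3 := congrFun hv 3
  simp [Matrix.mulVec, dotProduct, Fin.sum_univ_four, Matrix.map_apply,
    Pi.smul_apply, smul_eq_mul] at e0 e1 e2 e3
  set μ : ℂ := lam + (ε : ℂ) * (α : ℂ) with hμ_def
  have E0 : (a : ℂ) * v 1 = μ * v 0 := by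
    linear_combination e0
  have E1 : (b : ℂ) * v 0 + (1/2 : ℂ) * v 2 = μ * v 1 := by
    linear_combination e1
  have E2 : (a : ℂ) * v 3 = μ * v 2 := by
    linear_combination e2
  have E3 : (1/2 : ℂ) * v 0 + (b : ℂ) * v 2 = μ * v 3 := by
    linear_combination e3
  have h1 : μ ^ 2 * v 0 = (a : ℂ) * (b : ℂ) * v 0 + ((a : ℂ)/2) * v 2 := by
    linear_combination (-(a : ℂ)) * E1 - μ * E0
  have h2 : μ ^ 2 * v 2 = ((a : ℂ)/2) * v 0 + (a : ℂ) * (b : ℂ) * v 2 := by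
    linear_combination (-(a : ℂ)) * E3 - μ * E2
  by_cases hcase : v 0 = 0 ∧ v 2 = 0
  · -- then v = 0, contradiction
    exfalso
    obtain ⟨hv02, hv22⟩ := hcase
    have hv1 : v 1 = 0 := by
      have : (a : ℂ) * v 1 = 0 := by rw [E0, hv02]; ring
      exact (mul_eq_zero.mp this).resolve_left (by exact_mod_cast ha')
    have hv3 : v 3 = 0 := by
      have : (a : ℂ) * v 3 = 0 := by rw [E2, hv22]; ring
      exact (mul_eq_zero.mp this).resolve_left (by exact_mod_cast ha')
    apply hv0
    funext i
    fin_cases i <;> simp [hv02, hv1, hv22, hv3]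
  · -- μ² is one of the negative reals a(b±1/2)
    have hk0 : ((μ ^ 2 - (a : ℂ) * (b : ℂ)) ^ 2 - ((a : ℂ)/2) ^ 2) * v 0 = 0 := by
      linear_combination (μ ^ 2 - (a : ℂ) * (b : ℂ)) * h1 + ((a : ℂ)/2) * h2
    have hk2 : ((μ ^ 2 - (a : ℂ) * (b : ℂ)) ^ 2 - ((a : ℂ)/2) ^ 2) * v 2 = 0 := by
      linear_combination (μ ^ 2 - (a : ℂ) * (b : ℂ)) * h2 + ((a : ℂ)/2) * h1
    have hq : (μ ^ 2 - (a : ℂ) * (b : ℂ)) ^ 2 - ((a : ℂ)/2) ^ 2 = 0 := by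
      rcases not_and_or.mp hcase with h | h
      · exact (mul_eq_zero.mp hk0).resolve_right h
      · exact (mul_eq_zero.mp hk2).resolve_right h
    have hfact : (μ ^ 2 - ((a * (b + 1/2) : ℝ) : ℂ)) * (μ ^ 2 - ((a * (b - 1/2) : ℝ) : ℂ)) = 0 := by
      push_cast
      linear_combination hq
    have hre : μ.re = 0 := by
      rcases mul_eq_zero.mp hfact with h | h
      · exact re_eq_zero_of_sq_neg μ (a * (b + 1/2)) (mul_neg_of_neg_of_pos ha (by linarith)) (by linear_combination h)
      · exact re_eq_zero_of_sq_neg μ (a * (b - 1/2)) (mul_neg_of_neg_of_pos ha (by linarith)) (by linear_combination h)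
    have hlre : lam.re = -(ε * α) := by
      have : μ.re = lam.re + ε * α := by
        rw [hμ_def]; simp
      linarith [this ▸ hre]
    refine ⟨hlre, fun hα => ?_⟩
    rw [hlre]
    have : 0 < ε * α := mul_pos hε hα
    linarith
end

section
/- Let α, β, ω ∈ ℝ, ε > 0, I > 0 and θ ∈ ℝ with β cos θ = −α√I, β sin θ > 0, and 2εβ√I sin θ − ε²β² sin²θ/I > ε²α². Let M be the 4×4 real matrix M = [[−εα, 2εβ√I sin θ, 0, 0], [½ − εβ sin θ/(2I^{3/2}), −εα, ½, 0], [0, 0, −εα, 2εβ√I sin θ], [½, 0, ½ − εβ sin θ/(2I^{3/2}), −εα]]. Then λ = −εα + √(2εβ√I sin θ − ε²β² sin²θ/I) is a real eigenvalue of M with λ > 0; in particular the fixed point Q_ε is a saddle. -/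
/-- At a symmetric fixed point with `β sin θ > 0` and
`2εβ√I sin θ − ε²β² sin²θ/I > ε²α²` (the point `Q_ε`), the Jacobian has the
positive real eigenvalue `λ = −εα + √(2εβ√I sin θ − ε²β² sin²θ/I)`; hence
`Q_ε` is a saddle. -/
theorem Qeps_saddle_eigenvalue
    (α β ω ε : ℝ) (hε : 0 < ε) (I : ℝ) (hI : 0 < I) (θ : ℝ)
    (hfix : β * Real.cos θ = -(α * Real.sqrt I))
    (hsin : 0 < β * Real.sin θ)
    (hgap : ε ^ 2 * α ^ 2 <
      2 * ε * β * Real.sqrt I * Real.sin θ - ε ^ 2 * β ^ 2 * Real.sin θ ^ 2 / I)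
    (M : Matrix (Fin 4) (Fin 4) ℝ)
    (hM : M = !![-(ε * α), 2 * ε * β * Real.sqrt I * Real.sin θ, 0, 0;
                 1/2 - ε * β * Real.sin θ / (2 * (I * Real.sqrt I)), -(ε * α), 1/2, 0;
                 0, 0, -(ε * α), 2 * ε * β * Real.sqrt I * Real.sin θ;
                 1/2, 0, 1/2 - ε * β * Real.sin θ / (2 * (I * Real.sqrt I)), -(ε * α)]) :
    ∃ v : Fin 4 → ℝ, v ≠ 0 ∧
      M.mulVec v = (-(ε * α) + Real.sqrt (2 * ε * β * Real.sqrt I * Real.sin θ -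
        ε ^ 2 * β ^ 2 * Real.sin θ ^ 2 / I)) • v ∧
      0 < -(ε * α) + Real.sqrt (2 * ε * β * Real.sqrt I * Real.sin θ -
        ε ^ 2 * β ^ 2 * Real.sin θ ^ 2 / I) := by
  set s := Real.sqrt I with hs
  have hspos : 0 < s := Real.sqrt_pos.mpr hI
  have hs2 : s ^ 2 = I := Real.sq_sqrt hI.le
  set D : ℝ := 2 * ε * β * s * Real.sin θ - ε ^ 2 * β ^ 2 * Real.sin θ ^ 2 / I with hD
  have hDpos : 0 < D := lt_of_le_of_lt (by positivity) hgap
  set μ : ℝ := Real.sqrt D with hμ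
  have hμpos : 0 < μ := Real.sqrt_pos.mpr hDpos
  have hμ2 : μ ^ 2 = D := Real.sq_sqrt hDpos.le
  set a : ℝ := 2 * ε * β * s * Real.sin θ with ha
  have hapos : 0 < a := by
    have := mul_pos (mul_pos (mul_pos (by norm_num : (0:ℝ) < 2) hε) hspos) hsin
    linarith [this]
  refine ⟨![a, μ, a, μ], ?_, ?_, ?_⟩
  · intro h
    have := congrFun h 0
    simp at this
    exact hapos.ne' this
  · have hμ2' : μ ^ 2 * I = a * I - ε ^ 2 * β ^ 2 * Real.sin θ ^ 2 := by
      rw [hμ2, hD]; field_simp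
    subst hM
    funext i
    fin_cases i
    · simp [Matrix.mulVec, dotProduct, Fin.sum_univ_four]; ring
    · simp [Matrix.mulVec, dotProduct, Fin.sum_univ_four]
      field_simp
      linear_combination (-2 * s) * hμ2'
    · simp [Matrix.mulVec, dotProduct, Fin.sum_univ_four]; ring
    · simp [Matrix.mulVec, dotProduct, Fin.sum_univ_four]
      field_simp
      linear_combination (-2 * s) * hμ2'
  · nlinarith [hμ2, hμpos, hgap, sq_nonneg (μ - ε * α)]
end
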